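/- arXiv:1305.1008 — 3 statements merged into one kernel-verified Lean document; each statement's English description precedes it below -/
import Mathlib

section
/- For every index i ∈ {1,…,n} the following identity holds: ∑_{k≠i} (λ(z_i) − λ(z_k))/(λ''(z_k)·z_{ik}⁸) = (1/120960)·(315C_{i3}⁶ − 1155C_{i3}⁴C_{i4} + 1050C_{i3}²C_{i4}² − 140C_{i4}³ + 504C_{i3}³C_{i5} − 602C_{i3}C_{i4}C_{i5} + 63C_{i5}² − 168C_{i3}²C_{i6} + 98C_{i4}C_{i6} + 44C_{i3}C_{i7} − 9C_{i8}). -/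
/-!
Shift `λ` to `q(y) = λ(z_i + y)`; then `q' = (n + 1) y v(y)`, where `v` is the nodal polynomial of
the other critical points `y_k = z_k - z_i`. The `k`-th term of the sum is the residue at `y_k` of
`(q(0) - q(y)) / (q'(y) y⁸)`, a rational function with no residue at `∞`, so the sum is minus its
residue at `0`: the coefficient of `y⁶` in the power series `((q(y) - q(0)) / y²) / (q'(y) / y)`.
The residue theorem enters through Lagrange interpolation (`∑ₖ T(y_k) / v'(y_k)` is the top
coefficient of `T` when `deg T < deg v`), and the coefficient of `y⁶` is found by solving the
triangular recursion for a quotient of power series.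
-/

open Polynomial Finset
open scoped PowerSeries Nat

theorem Polynomial.derivative_taylor {R : Type*} [CommSemiring R] (r : R) (f : R[X]) :
    derivative (taylor r f) = taylor r (derivative f) := by
  simp [taylor_apply, derivative_comp]

theorem Polynomial.factorial_mul_taylor_coeff {R : Type*} [CommSemiring R] (r : R) (f : R[X])
    (k : ℕ) : (k ! : R) * (taylor r f).coeff k = (derivative^[k] f).eval r := by
  rw [taylor_coeff, ← factorial_smul_hasseDeriv, LinearMap.smul_apply, nsmul_eq_mul, eval_mul,
    eval_natCast]

theorem Polynomial.divX_X_mul {R : Type*} [Semiring R] (f : R[X]) : divX (X * f) = f := by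
  ext j
  rw [coeff_divX, coeff_X_mul]

theorem Polynomial.X_pow_dvd_sub_trunc_mul {R : Type*} [CommRing R] {F v : R[X]} {G : R⟦X⟧}
    (hGv : G * v = F) (n : ℕ) : X ^ n ∣ F - PowerSeries.trunc n G * v := by
  rw [X_pow_dvd_iff]
  intro d hd
  rw [coeff_sub, ← Polynomial.coeff_coe, ← Polynomial.coeff_coe, Polynomial.coe_mul,
    ← PowerSeries.coeff_coe_trunc_of_lt hd (f := (PowerSeries.trunc n G : R⟦X⟧) * (v : R⟦X⟧)),
    PowerSeries.trunc_trunc_mul, hGv, PowerSeries.coeff_coe_trunc_of_lt hd, sub_self]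

namespace Lagrange

theorem taylor_nodal {R ι : Type*} [CommRing R] {s : Finset ι} {x : ι → R} (r : R) :
    taylor r (nodal s x) = nodal s (fun k => x k - r) := by
  rw [nodal, ← taylorAlgHom_apply, map_prod]
  refine prod_congr rfl fun k _ => ?_
  rw [taylorAlgHom_apply, map_sub, taylor_X, taylor_C, C_sub]
  ring

variable {K ι : Type*} [Field K] {s : Finset ι} {x : ι → K}

theorem coeff_card_nodal : (nodal s x).coeff #s = 1 := by
  simpa using (nodal_monic (s := s) (v := x)).coeff_natDegree

theorem eq_C_mul_nodal (hx : Set.InjOn x s) {f : K[X]} (hf : f.natDegree ≤ #s)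
    (h0 : ∀ k ∈ s, f.eval (x k) = 0) : f = C (f.coeff #s) * nodal s x := by
  rw [← sub_eq_zero]
  refine eq_zero_of_degree_lt_of_eval_index_eq_zero s hx ?_ fun k hk => by
    rw [eval_sub, eval_mul, eval_nodal_at_node hk, h0 k hk, mul_zero, sub_zero]
  rw [degree_lt_iff_coeff_zero]
  intro j hj
  rw [coeff_sub, coeff_C_mul]
  obtain hj | hj := hj.eq_or_lt
  · rw [← hj, coeff_card_nodal, mul_one, sub_self]
  · have hnodal : (nodal s x).natDegree < j := by rwa [natDegree_nodal]
    rw [coeff_eq_zero_of_natDegree_lt (hf.trans_lt hj), coeff_eq_zero_of_natDegree_lt hnodal,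
      mul_zero, sub_zero]

variable [DecidableEq ι]

theorem sum_eval_mul_nodalWeight (hx : Set.InjOn x s) {f : K[X]} (hf : f.degree < #s) :
    ∑ k ∈ s, f.eval (x k) * nodalWeight s x k = f.coeff (#s - 1) := by
  conv_rhs => rw [eq_interpolate hx hf]
  rw [interpolate_apply, finsetSum_coeff]
  refine (sum_congr rfl fun k hk => ?_).symm
  rw [basis_eq_prod_sub_inv_mul_nodal_div hk, ← nodal_erase_eq_nodal_div hk,
    ← mul_assoc, ← C_mul, coeff_C_mul, ← card_erase_of_mem hk, ← natDegree_nodal (R := K),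
    nodal_monic.coeff_natDegree, mul_one, mul_comm]

/-- The residue theorem for `F / (X ^ (m + 1) * nodal s x)`: the residues at the nodes, at `0`
and at `∞` add up to zero. -/
theorem sum_div_pow_mul_eval_derivative_nodal (hx : Set.InjOn x s) (hx0 : ∀ k ∈ s, x k ≠ 0)
    {F : K[X]} {m : ℕ} (hF : F.natDegree ≤ #s + m) :
    ∑ k ∈ s, F.eval (x k) / (x k ^ (m + 1) * (derivative (nodal s x)).eval (x k)) =
      F.coeff (#s + m) - PowerSeries.coeff m ((F : K⟦X⟧) * (nodal s x : K⟦X⟧)⁻¹) := by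
  obtain rfl | hs := s.eq_empty_or_nonempty
  · simp
  set v := nodal s x
  set G : K⟦X⟧ := (F : K⟦X⟧) * (v : K⟦X⟧)⁻¹
  set R := PowerSeries.trunc (m + 1) G
  have hGv : G * v = F := by
    rw [mul_assoc, mul_comm _ (v : K⟦X⟧), PowerSeries.mul_inv_cancel, mul_one]
    rw [← PowerSeries.coeff_zero_eq_constantCoeff_apply, Polynomial.coeff_coe,
      coeff_zero_eq_eval_zero, eval_nodal, prod_ne_zero_iff]
    exact fun k hk => by simpa using hx0 k hk
  obtain ⟨T, hT⟩ : X ^ (m + 1) ∣ F - R * v := X_pow_dvd_sub_trunc_mul hGv (m + 1)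
  have hR : R.natDegree ≤ m := Nat.lt_succ_iff.mp (PowerSeries.natDegree_trunc_lt _ _)
  have hRv : (R * v).natDegree ≤ m + #s :=
    natDegree_mul_le.trans (add_le_add hR natDegree_nodal.le)
  have hTdeg : T.degree < #s := by
    rw [degree_lt_iff_coeff_zero]
    intro j hj
    have := congrArg (coeff · (j + (m + 1))) hT
    simp only [coeff_X_pow_mul, coeff_sub] at this
    rw [← this, coeff_eq_zero_of_natDegree_lt (by omega), coeff_eq_zero_of_natDegree_lt (by omega),
      sub_zero]
  have hterm : ∀ k ∈ s, F.eval (x k) / (x k ^ (m + 1) * (derivative v).eval (x k)) =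
      T.eval (x k) * nodalWeight s x k := by
    intro k hk
    have := congrArg (eval (x k)) hT
    rw [eval_sub, eval_mul, eval_nodal_at_node hk, mul_zero, sub_zero, eval_mul, eval_pow,
      eval_X] at this
    rw [nodalWeight_eq_eval_derivative_nodal hk, this,
      mul_div_mul_left _ _ (pow_ne_zero _ (hx0 k hk)), div_eq_mul_inv]
  have hTtop := congrArg (coeff · (#s + m)) hT
  simp only [coeff_sub] at hTtop
  rw [show #s + m = #s - 1 + (m + 1) by have := hs.card_pos; omega, coeff_X_pow_mul] at hTtop
  rw [sum_congr rfl hterm, sum_eval_mul_nodalWeight hx hTdeg, ← hTtop,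
    show #s - 1 + (m + 1) = m + #s by have := hs.card_pos; omega,
    coeff_mul_add_eq_of_natDegree_le hR natDegree_nodal.le, PowerSeries.coeff_trunc,
    if_pos m.lt_succ_self, add_comm m, coeff_card_nodal, mul_one]

end Lagrange

theorem Polynomial.Monic.derivative_eq_C_mul_nodal {K ι : Type*} [Field K] {s : Finset ι}
    {x : ι → K} (hx : Set.InjOn x s) {p : K[X]} (hp : p.Monic) (hdeg : p.natDegree = #s + 1)
    (hcrit : ∀ k ∈ s, (derivative p).eval (x k) = 0) :
    derivative p = C ((#s : K) + 1) * Lagrange.nodal s x := by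
  have hcoeff : (derivative p).coeff #s = #s + 1 := by
    rw [coeff_derivative, ← hdeg, hp.coeff_natDegree, one_mul]
  rw [← hcoeff]
  exact Lagrange.eq_C_mul_nodal hx ((natDegree_derivative_le p).trans (by omega)) hcrit

theorem sum_eval_sub_eval_div_eq_coeff {K ι : Type*} [Field K] [DecidableEq ι] {s : Finset ι}
    {y : ι → K} (hy : Set.InjOn y s) (hy0 : ∀ k ∈ s, y k ≠ 0) {q : K[X]} {e : K}
    (hq : derivative q = C e * (X * Lagrange.nodal s y)) {m : ℕ}
    (hdeg : q.natDegree < #s + m + 2) :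
    ∑ k ∈ s, (q.eval 0 - q.eval (y k)) / ((derivative^[2] q).eval (y k) * y k ^ (m + 2)) =
      PowerSeries.coeff m ((divX (divX q) : K⟦X⟧) * (divX (derivative q) : K⟦X⟧)⁻¹) := by
  set F := divX (divX q)
  set v := Lagrange.nodal s y
  have hq1 : q.coeff 1 = 0 := by
    simpa [coeff_derivative] using congrArg (coeff · 0) hq
  have hsplit : ∀ t, q.eval t = q.eval 0 + t ^ 2 * F.eval t := fun t => by
    conv_lhs => rw [← X_mul_divX_add q, ← X_mul_divX_add (divX q), coeff_divX, hq1]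
    simp only [eval_add, eval_mul, eval_X, eval_C, coeff_zero_eq_eval_zero]
    ring
  have hq2 : ∀ t, (derivative^[2] q).eval t = e * (v.eval t + t * (derivative v).eval t) := by
    intro t
    simp [hq, derivative_mul]
  have hterm : ∀ k ∈ s, (q.eval 0 - q.eval (y k)) / ((derivative^[2] q).eval (y k) * y k ^ (m + 2))
      = -e⁻¹ * (F.eval (y k) / (y k ^ (m + 1) * (derivative v).eval (y k))) := by
    intro k hk
    rw [hsplit (y k), hq2, Lagrange.eval_nodal_at_node hk, zero_add,
      show q.eval 0 - (q.eval 0 + y k ^ 2 * F.eval (y k)) = y k ^ 2 * -F.eval (y k) by ring,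
      show e * (y k * (derivative v).eval (y k)) * y k ^ (m + 2) =
        y k ^ 2 * (e * (y k ^ (m + 1) * (derivative v).eval (y k))) by ring,
      mul_div_mul_left _ _ (pow_ne_zero _ (hy0 k hk))]
    ring
  have hF : F.natDegree ≤ #s + m := by
    simp only [F, natDegree_divX_eq_natDegree_tsub_one]
    omega
  rw [sum_congr rfl hterm, ← mul_sum, Lagrange.sum_div_pow_mul_eval_derivative_nodal hy hy0 hF,
    coeff_divX, coeff_divX, coeff_eq_zero_of_natDegree_lt (by omega), hq, divX_C_mul, divX_X_mul,
    Polynomial.coe_mul, Polynomial.coe_C, PowerSeries.mul_inv_rev, PowerSeries.C_inv, ← mul_assoc,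
    PowerSeries.coeff_mul_C]
  ring

theorem quotient_coeff_six_of_recursion {K : Type*} [Field K] [CharZero K] (a c g : ℕ → K)
    (ha2 : a 2 ≠ 0) (hc : ∀ k, (k ! : K) * a k = c k * (2 * a 2))
    (hg : ∀ j ≤ 6, ∑ m ∈ range (j + 1), g m * (a (j - m + 2) * (j - m + 2 : ℕ)) = a (j + 2)) :
    g 6 = 1 / 120960 * (315 * c 3 ^ 6 - 1155 * c 3 ^ 4 * c 4 + 1050 * c 3 ^ 2 * c 4 ^ 2
      - 140 * c 4 ^ 3 + 504 * c 3 ^ 3 * c 5 - 602 * c 3 * c 4 * c 5 + 63 * c 5 ^ 2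
      - 168 * c 3 ^ 2 * c 6 + 98 * c 4 * c 6 + 44 * c 3 * c 7 - 9 * c 8) := by
  have h2a2 : 2 * a 2 ≠ 0 := mul_ne_zero two_ne_zero ha2
  have hc2 : c 2 = 1 := by
    have := hc 2
    norm_num [Nat.factorial] at this
    exact (mul_eq_right₀ h2a2).mp this.symm
  have ha : ∀ k, a k = 2 * a 2 * c k / k ! := fun k => by
    rw [eq_div_iff (Nat.cast_ne_zero.2 k.factorial_ne_zero), mul_comm, hc k, mul_comm]
  have e : ∀ j ≤ 6, ∑ m ∈ range (j + 1), g m * (c (j - m + 2) / (j - m + 2)! * (j - m + 2 : ℕ)) =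
      c (j + 2) / (j + 2)! := by
    intro j hj
    refine mul_left_cancel₀ h2a2 ?_
    rw [mul_sum]
    convert hg j hj using 1
    · refine sum_congr rfl fun m _ => ?_
      rw [ha (j - m + 2)]
      ring
    · rw [ha (j + 2)]
      ring
  have e0 := e 0 (by norm_num)
  have e1 := e 1 (by norm_num)
  have e2 := e 2 (by norm_num)
  have e3 := e 3 (by norm_num)
  have e4 := e 4 (by norm_num)
  have e5 := e 5 (by norm_num)
  have e6 := e 6 (by norm_num)
  norm_num [sum_range_succ, Nat.factorial, hc2] at e0 e1 e2 e3 e4 e5 e6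
  have g1 : g 1 = -c 3 / 12 := by linear_combination e1 - c 3 / 2 * e0
  have g2 : g 2 = c 3 ^ 2 / 24 - c 4 / 24 := by
    linear_combination e2 - c 3 / 2 * g1 - c 4 / 6 * e0
  have g3 : g 3 = 5 / 144 * c 3 * c 4 - c 5 / 80 - c 3 ^ 3 / 48 := by
    linear_combination e3 - c 3 / 2 * g2 - c 4 / 6 * g1 - c 5 / 24 * e0
  have g4 : g 4 = c 4 ^ 2 / 144 + 7 / 720 * c 3 * c 5 - 7 / 288 * c 3 ^ 2 * c 4 + c 3 ^ 4 / 96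
      - c 6 / 360 := by
    linear_combination e4 - c 3 / 2 * g3 - c 4 / 6 * g2 - c 5 / 24 * g1 - c 6 / 120 * e0
  have g5 : g 5 = 11 / 2880 * c 4 * c 5 + c 3 * c 6 / 480 - c 3 * c 4 ^ 2 / 108
      - 19 / 2880 * c 3 ^ 2 * c 5 + c 3 ^ 3 * c 4 / 64 - c 3 ^ 5 / 192 - c 7 / 2016 := by
    linear_combination e5 - c 3 / 2 * g4 - c 4 / 6 * g3 - c 5 / 24 * g2 - c 6 / 120 * g1
      - c 7 / 720 * e0
  linear_combination e6 - c 3 / 2 * g5 - c 4 / 6 * g4 - c 5 / 24 * g3 - c 6 / 120 * g2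
    - c 7 / 720 * g1 - c 8 / 5040 * e0

theorem coeff_six_divX_mul_inv {K : Type*} [Field K] [CharZero K] (q : K[X]) (c : ℕ → K)
    (hq2 : q.coeff 2 ≠ 0) (hc : ∀ k, (k ! : K) * q.coeff k = c k * (2 * q.coeff 2)) :
    PowerSeries.coeff 6 ((divX (divX q) : K⟦X⟧) * (divX (derivative q) : K⟦X⟧)⁻¹) =
      1 / 120960 * (315 * c 3 ^ 6 - 1155 * c 3 ^ 4 * c 4 + 1050 * c 3 ^ 2 * c 4 ^ 2
        - 140 * c 4 ^ 3 + 504 * c 3 ^ 3 * c 5 - 602 * c 3 * c 4 * c 5 + 63 * c 5 ^ 2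
        - 168 * c 3 ^ 2 * c 6 + 98 * c 4 * c 6 + 44 * c 3 * c 7 - 9 * c 8) := by
  set W : K⟦X⟧ := (divX (derivative q) : K⟦X⟧)
  have hW : PowerSeries.constantCoeff W ≠ 0 := by
    rw [← PowerSeries.coeff_zero_eq_constantCoeff_apply, Polynomial.coeff_coe, coeff_divX,
      coeff_derivative]
    norm_num [hq2]
  refine quotient_coeff_six_of_recursion q.coeff c (PowerSeries.coeff · (divX (divX q) * W⁻¹))
    hq2 hc fun j _ => ?_
  have hGW : (divX (divX q) : K⟦X⟧) * W⁻¹ * W = divX (divX q) := by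
    rw [mul_assoc, PowerSeries.inv_mul_cancel _ hW, mul_one]
  have := congrArg (PowerSeries.coeff j) hGW
  rw [PowerSeries.coeff_mul, Finset.Nat.sum_antidiagonal_eq_sum_range_succ_mk,
    Polynomial.coeff_coe, coeff_divX, coeff_divX] at this
  rw [← this]
  refine sum_congr rfl fun m _ => ?_
  rw [Polynomial.coeff_coe, coeff_divX, coeff_derivative]
  push_cast
  ring

theorem stmt_10_general (n : ℕ) (p : Polynomial ℂ)
    (hp : p.Monic) (hdeg : p.natDegree = n + 1)
    (z : Fin n → ℂ) (hz : Function.Injective z)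
    (hcrit : ∀ i, (derivative p).eval (z i) = 0)
    (hnd : ∀ i, (derivative^[2] p).eval (z i) ≠ 0)
    (C : Fin n → ℕ → ℂ)
    (hC : ∀ i k, C i k = ((derivative^[k] p).eval (z i)) / ((derivative^[2] p).eval (z i)))
    (i : Fin n) :
    ∑ k ∈ univ.filter (fun k => k ≠ i),
        (p.eval (z i) - p.eval (z k)) / ((derivative^[2] p).eval (z k) * (z i - z k) ^ 8)
      = (1 / 120960) *
          (315 * (C i 3) ^ 6 - 1155 * (C i 3) ^ 4 * C i 4
            + 1050 * (C i 3) ^ 2 * (C i 4) ^ 2 - 140 * (C i 4) ^ 3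
            + 504 * (C i 3) ^ 3 * C i 5 - 602 * C i 3 * C i 4 * C i 5
            + 63 * (C i 5) ^ 2 - 168 * (C i 3) ^ 2 * C i 6
            + 98 * C i 4 * C i 6 + 44 * C i 3 * C i 7 - 9 * C i 8) := by
  set q := taylor (z i) p
  set y : Fin n → ℂ := fun k => z k - z i
  have hder := hp.derivative_eq_C_mul_nodal (s := univ) hz.injOn
    (by rw [hdeg, card_univ, Fintype.card_fin]) fun k _ => hcrit k
  have hq : derivative q = Polynomial.C ((n : ℂ) + 1) * (X * Lagrange.nodal (univ.erase i) y) := by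
    rw [derivative_taylor, hder, taylor_mul, taylor_C, Lagrange.taylor_nodal,
      Lagrange.nodal_eq_mul_nodal_erase (mem_univ i), card_univ, Fintype.card_fin]
    simp [y]
  have hd2 : 2 * q.coeff 2 = (derivative^[2] p).eval (z i) := by
    simpa using factorial_mul_taylor_coeff (z i) p 2
  have hc : ∀ k, (k ! : ℂ) * q.coeff k = C i k * (2 * q.coeff 2) := fun k => by
    rw [hC, hd2, factorial_mul_taylor_coeff, div_mul_cancel₀ _ (hnd i)]
  have hterm : ∀ k ∈ univ.erase i,
      (p.eval (z i) - p.eval (z k)) / ((derivative^[2] p).eval (z k) * (z i - z k) ^ 8) =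
        (q.eval 0 - q.eval (y k)) / ((derivative^[2] q).eval (y k) * y k ^ (6 + 2)) := by
    intro k _
    rw [(Function.Commute.iterate_left (fun f => derivative_taylor (z i) f) 2) p]
    simp only [q, y, taylor_eval, zero_add, sub_add_cancel]
    ring
  rw [filter_ne', sum_congr rfl hterm, sum_eval_sub_eval_div_eq_coeff ?_ ?_ hq ?_,
    coeff_six_divX_mul_inv q (C i) (fun h => hnd i (by rw [← hd2, h, mul_zero])) hc]
  · exact fun a _ b _ h => hz (sub_left_inj.mp h)
  · exact fun k hk => sub_ne_zero.mpr (hz.ne (ne_of_mem_erase hk))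
  · rw [natDegree_taylor, hdeg, card_erase_of_mem (mem_univ i), card_univ, Fintype.card_fin]
    omega

/-- Residue formula R₃(8): for every index `i`,
`∑_{{k≠i}} (λ(z_i) − λ(z_k))/(λ''(z_k)·z_ik⁸) = (1/120960)·(315C_i3⁶ − 1155C_i3⁴C_i4
  + 1050C_i3²C_i4² − 140C_i4³ + 504C_i3³C_i5 − 602C_i3C_i4C_i5 + 63C_i5²
  − 168C_i3²C_i6 + 98C_i4C_i6 + 44C_i3C_i7 − 9C_i8)`. -/
theorem stmt_10 (n : ℕ) (hn : 1 ≤ n) (p : Polynomial ℂ)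
    (hp : p.Monic) (hdeg : p.natDegree = n + 1)
    (z : Fin n → ℂ) (hz : Function.Injective z)
    (hcrit : ∀ i, (derivative p).eval (z i) = 0)
    (hnd : ∀ i, (derivative^[2] p).eval (z i) ≠ 0)
    (C : Fin n → ℕ → ℂ)
    (hC : ∀ i k, C i k = ((derivative^[k] p).eval (z i)) / ((derivative^[2] p).eval (z i)))
    (i : Fin n) :
    ∑ k ∈ univ.filter (fun k => k ≠ i),
        (p.eval (z i) - p.eval (z k)) / ((derivative^[2] p).eval (z k) * (z i - z k) ^ 8)
      = (1 / 120960) *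
          (315 * (C i 3) ^ 6 - 1155 * (C i 3) ^ 4 * C i 4
            + 1050 * (C i 3) ^ 2 * (C i 4) ^ 2 - 140 * (C i 4) ^ 3
            + 504 * (C i 3) ^ 3 * C i 5 - 602 * C i 3 * C i 4 * C i 5
            + 63 * (C i 5) ^ 2 - 168 * (C i 3) ^ 2 * C i 6
            + 98 * C i 4 * C i 6 + 44 * C i 3 * C i 7 - 9 * C i 8) :=
  stmt_10_general n p hp hdeg z hz hcrit hnd C hC i
end

section
/- For every index i ∈ {1,…,n} the following identity holds: ∑_{k≠i} C_{k4}/z_{ik}² = −(1/12)·(3C_{i3}²C_{i4} − 2C_{i4}² − 6C_{i3}C_{i5} + 6C_{i6}). -/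
/-!
Put `q = λ'`, `P = q'''` and `t = X - zᵢ`. The sum is the sum of the residues of `P / (q t²)` at the
simple poles `z_k`, `k ≠ i`; as `deg P < deg q`, it is minus the residue at the triple pole `zᵢ`,
i.e. minus the coefficient `b₁` of the 2-jet `b₁ t² + b₂ t + b₃` of `P / g` at `zᵢ`, where
`g = q / t`. Residues are replaced by polynomial algebra: with `g_k = q / (X - z_k)` and the
weights `w_k` of the sum, `t² ∑_{k ≠ i} w_k g_k + g (b₁ t² + b₂ t + b₃) - P` has degree at most
`n + 1` but vanishes at every `z_k` and to order three at `zᵢ`, so it is zero; its coefficient of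
`X ^ (n + 1)` is `lc(q) (∑ w_k + b₁)`.
-/

open Polynomial Finset
open scoped Nat

namespace Polynomial

section CommRing

variable {R : Type*} [CommRing R]

theorem eval_divByMonic_X_sub_C_self (f : R[X]) (a : R) :
    (f /ₘ (X - C a)).eval a = (derivative f).eval a := by
  simpa using congrArg (eval a) (divByMonic_add_X_sub_C_mul_derivative_divByMonic_eq_derivative f a)

theorem eval_divByMonic_X_sub_C_of_isRoot [IsDomain R] {f : R[X]} {a b : R} (ha : f.IsRoot a)
    (hb : f.IsRoot b) (hab : a ≠ b) : (f /ₘ (X - C a)).eval b = 0 := by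
  have h := congrArg (eval b) (mul_divByMonic_eq_iff_isRoot.2 ha)
  rw [eval_mul, hb.eq_zero, eval_sub, eval_X, eval_C] at h
  exact (mul_eq_zero.1 h).resolve_left (sub_ne_zero.2 hab.symm)

theorem taylor_X_sub_C (a : R) : taylor a (X - C a) = X := by
  rw [map_sub, taylor_X, taylor_C, add_sub_cancel_right]

theorem X_sub_C_pow_dvd_iff_X_pow_dvd_taylor (f : R[X]) (a : R) (m : ℕ) :
    (X - C a) ^ m ∣ f ↔ X ^ m ∣ taylor a f := by
  rw [← map_dvd_iff (taylorEquiv a), map_pow]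
  show taylor a (X - C a) ^ m ∣ taylor a f ↔ _
  rw [taylor_X_sub_C]

theorem factorial_mul_taylor_coeff_s11 (f : R[X]) (a : R) (j : ℕ) :
    (j ! : R) * (taylor a f).coeff j = (derivative^[j] f).eval a := by
  rw [taylor_coeff, ← factorial_smul_hasseDeriv, LinearMap.smul_apply, eval_smul, nsmul_eq_mul]

theorem natDegree_divByMonic_X_sub_C [Nontrivial R] (f : R[X]) (a : R) :
    (f /ₘ (X - C a)).natDegree = f.natDegree - 1 := by
  rw [natDegree_divByMonic f (monic_X_sub_C a), natDegree_X_sub_C]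

theorem coeff_divByMonic_X_sub_C_natDegree_sub_one [IsDomain R] {f : R[X]}
    (hf : f.natDegree ≠ 0) (a : R) :
    (f /ₘ (X - C a)).coeff (f.natDegree - 1) = f.leadingCoeff := by
  rw [← natDegree_divByMonic_X_sub_C, coeff_natDegree,
    leadingCoeff_divByMonic_X_sub_C f (fun h => hf (natDegree_eq_of_degree_eq_some h))]

theorem eq_zero_of_X_sub_C_pow_dvd_of_eval_eq_zero [IsDomain R] {p : R[X]} {a : R} {m : ℕ}
    {s : Finset R} (hdvd : (X - C a) ^ m ∣ p) (ha : a ∉ s) (heval : ∀ x ∈ s, p.eval x = 0)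
    (hdeg : p.natDegree < m + #s) : p = 0 := by
  obtain ⟨e, rfl⟩ := hdvd
  suffices e = 0 by rw [this, mul_zero]
  by_contra he
  have hmonic : ((X - C a) ^ m).Monic := (monic_X_sub_C a).pow m
  refine he (eq_zero_of_natDegree_lt_card_of_eval_eq_zero' e s (fun x hx => ?_) ?_)
  · have hx' := heval x hx
    rw [eval_mul, eval_pow, eval_sub, eval_X, eval_C] at hx'
    exact (mul_eq_zero.1 hx').resolve_left
      (pow_ne_zero _ (sub_ne_zero.2 (ne_of_mem_of_not_mem hx ha)))
  · rw [hmonic.natDegree_mul' he, natDegree_pow, natDegree_X_sub_C] at hdeg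
    omega

-- `h₀`, `h₁`, `h₂` compare Taylor coefficients at `a`; those of `q /ₘ (X - C a)` are the ones of
-- `q` shifted by one.
theorem X_sub_C_pow_three_dvd_divByMonic_mul_sub {q P : R[X]} {a : R} (ha : q.IsRoot a)
    {b₁ b₂ b₃ : R} (h₀ : (taylor a q).coeff 1 * b₃ = (taylor a P).coeff 0)
    (h₁ : (taylor a q).coeff 1 * b₂ + (taylor a q).coeff 2 * b₃ = (taylor a P).coeff 1)
    (h₂ : (taylor a q).coeff 1 * b₁ + (taylor a q).coeff 2 * b₂ + (taylor a q).coeff 3 * b₃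
      = (taylor a P).coeff 2) :
    (X - C a) ^ 3 ∣ q /ₘ (X - C a) * (C b₁ * (X - C a) ^ 2 + C b₂ * (X - C a) + C b₃) - P := by
  have hq : taylor a q = X * taylor a (q /ₘ (X - C a)) := by
    conv_lhs => rw [← mul_divByMonic_eq_iff_isRoot.2 ha]
    rw [taylor_mul, taylor_X_sub_C]
  have hcoeff : ∀ j, (taylor a (q /ₘ (X - C a))).coeff j = (taylor a q).coeff (j + 1) := by
    intro j; rw [hq, coeff_X_mul]
  rw [X_sub_C_pow_dvd_iff_X_pow_dvd_taylor, X_pow_dvd_iff]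
  intro d hd
  rw [map_sub, taylor_mul, map_add, map_add, taylor_mul, taylor_mul, taylor_C, taylor_C, taylor_C,
    taylor_pow, taylor_X_sub_C]
  interval_cases d <;>
    simp only [mul_add, ← mul_assoc, coeff_sub, coeff_add, coeff_mul_X_pow', coeff_mul_X,
      coeff_mul_C, mul_coeff_zero, coeff_C_zero, coeff_X_zero, coeff_X_pow, hcoeff,
      Nat.reduceAdd, Nat.reduceSub, Nat.reduceLeDiff, Nat.reduceEqDiff, ↓reduceIte]
  · linear_combination h₀
  · linear_combination h₁
  · linear_combination h₂

section Roots

variable [IsDomain R] {ι : Type*} [Fintype ι] {q : R[X]} {z : ι → R}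

theorem eval_derivative_ne_zero_of_natDegree_eq_card (hz : Function.Injective z)
    (hq : q.natDegree = Fintype.card ι) (hroot : ∀ k, q.IsRoot (z k)) (k : ι) :
    (derivative q).eval (z k) ≠ 0 := by
  have hcard : 0 < Fintype.card ι := Fintype.card_pos_iff.2 ⟨k⟩
  intro hk
  have hg : q /ₘ (X - C (z k)) = 0 := by
    refine eq_zero_of_natDegree_lt_card_of_eval_eq_zero _ hz (fun j => ?_) ?_
    · rcases eq_or_ne k j with rfl | hkj
      · rwa [eval_divByMonic_X_sub_C_self]
      · exact eval_divByMonic_X_sub_C_of_isRoot (hroot k) (hroot j) (hz.ne hkj)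
    · rw [natDegree_divByMonic_X_sub_C, hq]
      omega
  rw [← mul_divByMonic_eq_iff_isRoot.2 (hroot k), hg, mul_zero, natDegree_zero] at hq
  omega

end Roots

end CommRing

section Field

variable {K : Type*} [Field K] {ι : Type*} [Fintype ι] [DecidableEq ι] {q : K[X]} {z : ι → K}

theorem X_sub_C_sq_mul_sum_add_divByMonic_mul_eq (hz : Function.Injective z)
    (hq : q.natDegree = Fintype.card ι) (hroot : ∀ k, q.IsRoot (z k)) (i : ι) {P h : K[X]}
    (hP : P.natDegree ≤ Fintype.card ι) (hh : h.natDegree ≤ 2)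
    (hjet : (X - C (z i)) ^ 3 ∣ q /ₘ (X - C (z i)) * h - P) :
    (X - C (z i)) ^ 2 * ∑ k ∈ univ.erase i,
        C (P.eval (z k) / ((derivative q).eval (z k) * (z i - z k) ^ 2)) * (q /ₘ (X - C (z k)))
      + q /ₘ (X - C (z i)) * h = P := by
  classical
  set w : ι → K := fun k => P.eval (z k) / ((derivative q).eval (z k) * (z i - z k) ^ 2)
  set S := ∑ k ∈ univ.erase i, C (w k) * (q /ₘ (X - C (z k)))
  have hcard : 1 ≤ Fintype.card ι := Fintype.card_pos_iff.2 ⟨i⟩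
  have hg : ∀ k, (q /ₘ (X - C (z k))).natDegree = Fintype.card ι - 1 := fun k => by
    rw [natDegree_divByMonic_X_sub_C, hq]
  have hS : S.natDegree ≤ Fintype.card ι - 1 :=
    natDegree_sum_le_of_forall_le _ _ fun k _ => (natDegree_C_mul_le _ _).trans (hg k).le
  have hdvdS : X - C (z i) ∣ S := dvd_sum fun k hk => dvd_mul_of_dvd_right (dvd_iff_isRoot.2 <|
    eval_divByMonic_X_sub_C_of_isRoot (hroot k) (hroot i) (hz.ne (ne_of_mem_erase hk))) _
  have hSeval : ∀ j ≠ i, S.eval (z j) = w j * (derivative q).eval (z j) := fun j hji => by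
    rw [eval_finsetSum, sum_eq_single_of_mem j (mem_erase.2 ⟨hji, mem_univ j⟩)]
    · rw [eval_mul, eval_C, eval_divByMonic_X_sub_C_self]
    · intro k _ hkj
      rw [eval_mul, eval_divByMonic_X_sub_C_of_isRoot (hroot k) (hroot j) (hz.ne hkj), mul_zero]
  rw [← sub_eq_zero]
  refine eq_zero_of_X_sub_C_pow_dvd_of_eval_eq_zero (a := z i) (m := 3)
    (s := (univ.erase i).image z) ?_ ?_ ?_ ?_
  · rw [add_sub_assoc, pow_succ]
    exact dvd_add (mul_dvd_mul_left _ hdvdS) hjet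
  · simp [hz.eq_iff]
  · simp only [mem_image, mem_erase]
    rintro _ ⟨j, ⟨hji, -⟩, rfl⟩
    have hq' := eval_derivative_ne_zero_of_natDegree_eq_card hz hq hroot j
    have hij : z i - z j ≠ 0 := sub_ne_zero.2 (hz.ne hji.symm)
    rw [eval_sub, eval_add, eval_mul, eval_mul, hSeval j hji,
      eval_divByMonic_X_sub_C_of_isRoot (hroot i) (hroot j) (hz.ne hji.symm)]
    simp only [w, eval_pow, eval_sub, eval_X, eval_C]
    field_simp
    ring
  · rw [card_image_of_injective _ hz, card_erase_of_mem (mem_univ i), card_univ]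
    have h₁ := natDegree_mul_le_of_le (natDegree_pow_le_of_le 2 (natDegree_X_sub_C_le (z i))) hS
    have h₂ := natDegree_mul_le_of_le (hg i).le hh
    have h₃ := natDegree_sub_le_of_le ((natDegree_add_le _ _).trans (max_le_max h₁ h₂)) hP
    omega

theorem sum_eval_div_eval_derivative_mul_sq (hz : Function.Injective z)
    (hq : q.natDegree = Fintype.card ι) (hroot : ∀ k, q.IsRoot (z k)) (i : ι) {P h : K[X]}
    (hP : P.natDegree ≤ Fintype.card ι) (hh : h.natDegree ≤ 2)
    (hjet : (X - C (z i)) ^ 3 ∣ q /ₘ (X - C (z i)) * h - P) :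
    ∑ k ∈ univ.erase i, P.eval (z k) / ((derivative q).eval (z k) * (z i - z k) ^ 2)
      = -h.coeff 2 := by
  have hcard : 1 ≤ Fintype.card ι := Fintype.card_pos_iff.2 ⟨i⟩
  have hlc : q.leadingCoeff ≠ 0 := by
    rw [Ne, leadingCoeff_eq_zero]
    rintro rfl
    rw [natDegree_zero] at hq
    omega
  have hg : ∀ k, (q /ₘ (X - C (z k))).natDegree ≤ Fintype.card ι - 1 := fun k => by
    rw [natDegree_divByMonic_X_sub_C, hq]
  have hgc : ∀ k, (q /ₘ (X - C (z k))).coeff (Fintype.card ι - 1) = q.leadingCoeff := fun k => by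
    rw [← hq, coeff_divByMonic_X_sub_C_natDegree_sub_one (by omega)]
  have ht : ((X - C (z i)) ^ 2).natDegree ≤ 2 := natDegree_pow_le_of_le 2 (natDegree_X_sub_C_le _)
  have ht2 : ((X - C (z i)) ^ 2).coeff 2 = 1 := by simp [sq, coeff_mul_X_sub_C, coeff_X]
  have hpf := congrArg (coeff · (2 + (Fintype.card ι - 1)))
    (X_sub_C_sq_mul_sum_add_divByMonic_mul_eq hz hq hroot i hP hh hjet)
  rw [coeff_add, coeff_mul_add_eq_of_natDegree_le ht
    (natDegree_sum_le_of_forall_le _ _ fun k _ => (natDegree_C_mul_le _ _).trans (hg k)),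
    add_comm 2, coeff_mul_add_eq_of_natDegree_le (hg i) hh, ht2, finsetSum_coeff,
    coeff_eq_zero_of_natDegree_lt (by omega : P.natDegree < _)] at hpf
  simp only [coeff_C_mul, hgc, one_mul] at hpf
  rw [← sum_mul] at hpf
  rw [eq_neg_iff_add_eq_zero]
  exact (mul_eq_zero.1 (by linear_combination hpf)).resolve_left hlc

theorem sum_eval_div_eval_derivative_mul_sq_of_taylor (hz : Function.Injective z)
    (hq : q.natDegree = Fintype.card ι) (hroot : ∀ k, q.IsRoot (z k)) (i : ι) {P : K[X]}
    (hP : P.natDegree ≤ Fintype.card ι) {b₁ b₂ b₃ : K}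
    (h₀ : (taylor (z i) q).coeff 1 * b₃ = (taylor (z i) P).coeff 0)
    (h₁ : (taylor (z i) q).coeff 1 * b₂ + (taylor (z i) q).coeff 2 * b₃ = (taylor (z i) P).coeff 1)
    (h₂ : (taylor (z i) q).coeff 1 * b₁ + (taylor (z i) q).coeff 2 * b₂
      + (taylor (z i) q).coeff 3 * b₃ = (taylor (z i) P).coeff 2) :
    ∑ k ∈ univ.erase i, P.eval (z k) / ((derivative q).eval (z k) * (z i - z k) ^ 2) = -b₁ := by
  rw [sum_eval_div_eval_derivative_mul_sq hz hq hroot i hP (by compute_degree)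
    (X_sub_C_pow_three_dvd_divByMonic_mul_sub (hroot i) h₀ h₁ h₂)]
  simp [sq, coeff_mul_X_sub_C, coeff_X]

end Field

end Polynomial

theorem stmt_11_general (n : ℕ) (p : Polynomial ℂ)
    (hdeg : p.natDegree = n + 1)
    (z : Fin n → ℂ) (hz : Function.Injective z)
    (hcrit : ∀ i, (derivative p).eval (z i) = 0)
    (C : Fin n → ℕ → ℂ)
    (hC : ∀ i k, C i k = ((derivative^[k] p).eval (z i)) / ((derivative^[2] p).eval (z i)))
    (i : Fin n) :
    ∑ k ∈ univ.filter (fun k => k ≠ i), C k 4 / (z i - z k) ^ 2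
      = -(1 / 12) * (3 * (C i 3) ^ 2 * C i 4 - 2 * (C i 4) ^ 2
          - 6 * C i 3 * C i 5 + 6 * C i 6) := by
  have hq : (derivative p).natDegree = Fintype.card (Fin n) := by
    rw [natDegree_derivative, hdeg, Fintype.card_fin, Nat.add_sub_cancel]
  have hP : (derivative^[4] p).natDegree ≤ Fintype.card (Fin n) := by
    have := natDegree_iterate_derivative p 4
    rw [Fintype.card_fin]
    omega
  have hd₂ : (derivative^[2] p).eval (z i) ≠ 0 :=
    eval_derivative_ne_zero_of_natDegree_eq_card hz hq hcrit i
  have htaylor : ∀ j m, (taylor (z i) (derivative^[m] p)).coeff j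
      = (derivative^[j + m] p).eval (z i) / j ! := fun j m => by
    rw [Function.iterate_add_apply, ← factorial_mul_taylor_coeff_s11, mul_div_cancel_left₀ _
      (Nat.cast_ne_zero.2 (Nat.factorial_ne_zero j))]
  have hq' : ∀ j, (taylor (z i) (derivative p)).coeff j
      = (derivative^[j + 1] p).eval (z i) / j ! := fun j => htaylor j 1
  have key := sum_eval_div_eval_derivative_mul_sq_of_taylor hz hq hcrit i hP
    (b₃ := C i 4) (b₂ := C i 5 - C i 3 * C i 4 / 2)
    (b₁ := (C i 6 - C i 3 * (C i 5 - C i 3 * C i 4 / 2) - C i 4 * C i 4 / 3) / 2)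
    (by simp only [hq', htaylor, hC, Nat.reduceAdd, Nat.factorial]; field_simp)
    (by simp only [hq', htaylor, hC, Nat.reduceAdd, Nat.factorial]; field_simp; ring)
    (by simp only [hq', htaylor, hC, Nat.reduceAdd, Nat.factorial]; field_simp; ring)
  rw [filter_ne']
  convert key using 1
  · refine sum_congr rfl fun k _ => ?_
    rw [hC, div_div]
    rfl
  · ring

/-- Residue formula R₄(2,4): for every index `i`,
`∑_{{k≠i}} C_k4/z_ik² = −(1/12)·(3C_i3²C_i4 − 2C_i4² − 6C_i3C_i5 + 6C_i6)`. -/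
theorem stmt_11 (n : ℕ) (hn : 1 ≤ n) (p : Polynomial ℂ)
    (hp : p.Monic) (hdeg : p.natDegree = n + 1)
    (z : Fin n → ℂ) (hz : Function.Injective z)
    (hcrit : ∀ i, (derivative p).eval (z i) = 0)
    (hnd : ∀ i, (derivative^[2] p).eval (z i) ≠ 0)
    (C : Fin n → ℕ → ℂ)
    (hC : ∀ i k, C i k = ((derivative^[k] p).eval (z i)) / ((derivative^[2] p).eval (z i)))
    (i : Fin n) :
    ∑ k ∈ univ.filter (fun k => k ≠ i), C k 4 / (z i - z k) ^ 2
      = -(1 / 12) * (3 * (C i 3) ^ 2 * C i 4 - 2 * (C i 4) ^ 2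
          - 6 * C i 3 * C i 5 + 6 * C i 6) :=
  stmt_11_general n p hdeg z hz hcrit C hC i
end

section
/- For every pair of distinct indices i, j ∈ {1,…,n} the following identity holds: ∑_{k≠i,j} 1/(z_{ik}·z_{jk}²) = −3/z_{ij}³ + (C_{i3} − C_{j3})/(2z_{ij}²) + (1/z_{ij})·(C_{j3}²/4 − C_{j4}/3). -/
/-!
Since `λ'` has degree at most `n` and the `n` distinct roots `z_k`, it equals `c ∏_k (X - z_k)`.
Writing `λ' = c (X - z_i) F_i`, one gets `λ^{(k+2)}(z_i) = c (k+1) F_i^{(k)}(z_i)`, hence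
`C_{i3} = 2 F_i'(z_i)/F_i(z_i) = 2 ∑_{m≠i} 1/z_{im}` and
`C_{i4} = 3 F_i''(z_i)/F_i(z_i) = 3 ((∑_{m≠i} 1/z_{im})² - ∑_{m≠i} 1/z_{im}²)`.
In particular `C_{j3}²/4 - C_{j4}/3 = ∑_{m≠j} 1/z_{jm}²`, and the identity is the sum over `k`
of the partial fractions `1/(x y²) = 1/(d² x) - 1/(d² y) + 1/(d y²)`, `d = x - y`, at
`x = z_{ik}`, `y = z_{jk}`.
-/

open Polynomial Finset

namespace Polynomial

section CommRing

variable {R : Type*} [CommRing R]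

theorem iterate_derivative_X_sub_C_mul (a : R) (F : R[X]) (k : ℕ) :
    derivative^[k + 1] ((X - C a) * F)
      = (X - C a) * derivative^[k + 1] F + ((k : R[X]) + 1) * derivative^[k] F := by
  induction k with
  | zero => simp [derivative_mul, add_comm]
  | succ k ih =>
    rw [Function.iterate_succ_apply', ih, Function.iterate_succ_apply' _ (k + 1),
      Function.iterate_succ_apply' _ k]
    simp only [derivative_add, derivative_mul, derivative_sub, derivative_X, derivative_C,
      derivative_natCast, derivative_one]
    push_cast
    ring

theorem eval_iterate_derivative_X_sub_C_mul_self (a : R) (F : R[X]) (k : ℕ) :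
    (derivative^[k + 1] ((X - C a) * F)).eval a = ((k : R) + 1) * (derivative^[k] F).eval a := by
  simp [iterate_derivative_X_sub_C_mul]

end CommRing

section Field

variable {ι K : Type*} [Field K] (w : ι → K) {a : K}

theorem eval_derivative_prod_X_sub_C [DecidableEq ι] {s : Finset ι} (ha : ∀ m ∈ s, w m ≠ a) :
    (derivative (∏ m ∈ s, (X - C (w m)))).eval a
      = (∏ m ∈ s, (a - w m)) * ∑ m ∈ s, (a - w m)⁻¹ := by
  induction s using Finset.induction_on with
  | empty => simp
  | insert b s hb ih =>
    have hab : a - w b ≠ 0 := sub_ne_zero.2 (ha b (mem_insert_self b s)).symm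
    rw [prod_insert hb, derivative_mul, prod_insert hb, sum_insert hb]
    simp only [eval_add, eval_mul, derivative_sub, derivative_X, derivative_C, sub_zero,
      eval_sub, eval_X, eval_C, eval_prod, one_mul, ih fun m hm => ha m (mem_insert_of_mem hm)]
    field_simp

theorem eval_derivative_derivative_prod_X_sub_C [DecidableEq ι] {s : Finset ι}
    (ha : ∀ m ∈ s, w m ≠ a) :
    (derivative (derivative (∏ m ∈ s, (X - C (w m))))).eval a
      = (∏ m ∈ s, (a - w m)) * ((∑ m ∈ s, (a - w m)⁻¹) ^ 2 - ∑ m ∈ s, ((a - w m) ^ 2)⁻¹) := by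
  induction s using Finset.induction_on with
  | empty => simp
  | insert b s hb ih =>
    have ha' : ∀ m ∈ s, w m ≠ a := fun m hm => ha m (mem_insert_of_mem hm)
    have hab : a - w b ≠ 0 := sub_ne_zero.2 (ha b (mem_insert_self b s)).symm
    have h := iterate_derivative_X_sub_C_mul (w b) (∏ m ∈ s, (X - C (w m))) 1
    simp only [Function.iterate_succ, Function.iterate_zero, Function.comp_apply, id] at h
    rw [prod_insert hb, h, prod_insert hb, sum_insert hb, sum_insert hb]
    simp only [eval_add, eval_mul, eval_sub, eval_X, eval_C, eval_one, eval_natCast,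
      ih ha', eval_derivative_prod_X_sub_C w ha']
    field_simp
    ring

end Field

theorem eq_C_leadingCoeff_mul_prod_X_sub_C {ι R : Type*} [Fintype ι] [CommRing R] [IsDomain R]
    {q : R[X]} (hdeg : q.natDegree ≤ Fintype.card ι) {z : ι → R} (hz : Function.Injective z)
    (hroot : ∀ k, q.IsRoot (z k)) : q = C q.leadingCoeff * ∏ k, (X - C (z k)) := by
  classical
  rcases eq_or_ne q 0 with rfl | hq
  · simp
  have hle : univ.val.map z ≤ q.roots :=
    (Multiset.le_iff_subset (univ.nodup.map hz)).2 fun x hx => by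
      obtain ⟨k, -, rfl⟩ := Multiset.mem_map.1 hx
      exact (mem_roots hq).2 (hroot k)
  have hcard : Multiset.card q.roots ≤ Multiset.card (univ.val.map z) := by
    simpa using (card_roots' q).trans hdeg
  have hroots : univ.val.map z = q.roots := Multiset.eq_of_le_of_card_le hle hcard
  have hcard' : Multiset.card q.roots = q.natDegree :=
    le_antisymm (card_roots' q) (by simpa [← hroots] using hdeg)
  conv_lhs => rw [← C_leadingCoeff_mul_prod_multiset_X_sub_C hcard', ← hroots, Multiset.map_map]
  rfl

section Roots

variable {ι K : Type*} [Fintype ι] [DecidableEq ι] [Field K] (c : K) {z : ι → K} (i : ι)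

theorem eval_iterate_derivative_C_mul_prod_X_sub_C (k : ℕ) :
    (derivative^[k + 1] (C c * ∏ m, (X - C (z m)))).eval (z i)
      = c * (((k : K) + 1)
          * (derivative^[k] (∏ m ∈ univ.erase i, (X - C (z m)))).eval (z i)) := by
  rw [← mul_prod_erase _ _ (mem_univ i), iterate_derivative_C_mul, eval_mul, eval_C,
    eval_iterate_derivative_X_sub_C_mul_self]

variable {c}

theorem eval_iterate_derivative_div_eval_derivative
    (h : (derivative (C c * ∏ m, (X - C (z m)))).eval (z i) ≠ 0) (k : ℕ) :
    (derivative^[k + 1] (C c * ∏ m, (X - C (z m)))).eval (z i)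
        / (derivative (C c * ∏ m, (X - C (z m)))).eval (z i)
      = ((k : K) + 1) * (derivative^[k] (∏ m ∈ univ.erase i, (X - C (z m)))).eval (z i)
        / (∏ m ∈ univ.erase i, (X - C (z m))).eval (z i) := by
  have h₀ := eval_iterate_derivative_C_mul_prod_X_sub_C c (z := z) i 0
  simp only [zero_add, Function.iterate_one, Function.iterate_zero, id, Nat.cast_zero,
    one_mul] at h₀
  rw [h₀] at h ⊢
  rw [eval_iterate_derivative_C_mul_prod_X_sub_C, mul_div_mul_left _ _ (left_ne_zero_of_mul h)]

theorem prod_sub_ne_zero_of_injective (hz : Function.Injective z) :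
    ∏ m ∈ univ.erase i, (z i - z m) ≠ 0 :=
  prod_ne_zero_iff.2 fun _ hm => sub_ne_zero.2 (hz.ne (ne_of_mem_erase hm).symm)

theorem eval_iterate_derivative_two_div_eval_derivative (hz : Function.Injective z)
    (h : (derivative (C c * ∏ m, (X - C (z m)))).eval (z i) ≠ 0) :
    (derivative^[2] (C c * ∏ m, (X - C (z m)))).eval (z i)
        / (derivative (C c * ∏ m, (X - C (z m)))).eval (z i)
      = 2 * ∑ m ∈ univ.erase i, (z i - z m)⁻¹ := by
  rw [eval_iterate_derivative_div_eval_derivative i h 1, Function.iterate_one,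
    eval_derivative_prod_X_sub_C z fun _ hm => hz.ne (ne_of_mem_erase hm)]
  have hP := prod_sub_ne_zero_of_injective i hz
  simp only [eval_prod, eval_sub, eval_X, eval_C]
  field_simp
  ring

theorem eval_iterate_derivative_three_div_eval_derivative (hz : Function.Injective z)
    (h : (derivative (C c * ∏ m, (X - C (z m)))).eval (z i) ≠ 0) :
    (derivative^[3] (C c * ∏ m, (X - C (z m)))).eval (z i)
        / (derivative (C c * ∏ m, (X - C (z m)))).eval (z i)
      = 3 * ((∑ m ∈ univ.erase i, (z i - z m)⁻¹) ^ 2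
          - ∑ m ∈ univ.erase i, ((z i - z m) ^ 2)⁻¹) := by
  rw [eval_iterate_derivative_div_eval_derivative i h 2, Function.iterate_succ_apply,
    Function.iterate_one,
    eval_derivative_derivative_prod_X_sub_C z fun _ hm => hz.ne (ne_of_mem_erase hm)]
  have hP := prod_sub_ne_zero_of_injective i hz
  simp only [eval_prod, eval_sub, eval_X, eval_C]
  field_simp
  ring

end Roots

end Polynomial

theorem one_div_mul_sq_eq_of_sub {K : Type*} [Field K] {x y d : K} (hx : x ≠ 0) (hy : y ≠ 0)
    (hd : x - y = d) (hd0 : d ≠ 0) :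
    1 / (x * y ^ 2) = (d ^ 2)⁻¹ * x⁻¹ - (d ^ 2)⁻¹ * y⁻¹ + d⁻¹ * (y ^ 2)⁻¹ := by
  subst hd
  field_simp
  ring

theorem sum_one_div_mul_sq_sub_eq {ι K : Type*} [Fintype ι] [DecidableEq ι] [Field K]
    {z : ι → K} (hz : Function.Injective z) {i j : ι} (hij : i ≠ j) :
    ∑ k ∈ univ.filter (fun k => k ≠ i ∧ k ≠ j), 1 / ((z i - z k) * (z j - z k) ^ 2)
      = -3 / (z i - z j) ^ 3
        + (∑ m ∈ univ.erase i, (z i - z m)⁻¹ - ∑ m ∈ univ.erase j, (z j - z m)⁻¹) / (z i - z j) ^ 2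
        + 1 / (z i - z j) * ∑ m ∈ univ.erase j, ((z j - z m) ^ 2)⁻¹ := by
  set t := univ.filter (fun k => k ≠ i ∧ k ≠ j)
  have hsub : ∀ {a b}, a ≠ b → z a - z b ≠ 0 := fun h => sub_ne_zero.2 (hz.ne h)
  have hti : (univ.erase i).erase j = t := by ext; simp [t, and_comm]
  have htj : (univ.erase j).erase i = t := by ext; simp [t]
  have hsplit : ∀ {a b} (f : ι → K), a ≠ b →
      ∑ m ∈ univ.erase a, f m = f b + ∑ m ∈ (univ.erase a).erase b, f m :=
    fun f h => (add_sum_erase _ _ (mem_erase.2 ⟨h.symm, mem_univ _⟩)).symm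
  rw [hsplit _ hij, hsplit _ hij.symm, hsplit _ hij.symm, hti, htj,
    sum_congr rfl fun k hk => one_div_mul_sq_eq_of_sub (hsub (mem_filter.1 hk).2.1.symm)
      (hsub (mem_filter.1 hk).2.2.symm) (sub_sub_sub_cancel_right _ _ _) (hsub hij),
    sum_add_distrib, sum_sub_distrib, ← mul_sum, ← mul_sum, ← mul_sum]
  rw [← neg_sub (z i) (z j)]
  generalize ∑ k ∈ t, (z i - z k)⁻¹ = A
  generalize ∑ k ∈ t, (z j - z k)⁻¹ = B
  generalize ∑ k ∈ t, ((z j - z k) ^ 2)⁻¹ = Q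
  have hd := hsub hij
  generalize z i - z j = d at hd ⊢
  field_simp
  ring

theorem stmt_12_general (n : ℕ) (p : Polynomial ℂ)
    (hdeg : p.natDegree = n + 1)
    (z : Fin n → ℂ) (hz : Function.Injective z)
    (hcrit : ∀ i, (derivative p).eval (z i) = 0)
    (hnd : ∀ i, (derivative^[2] p).eval (z i) ≠ 0)
    (C : Fin n → ℕ → ℂ)
    (hC : ∀ i k, C i k = ((derivative^[k] p).eval (z i)) / ((derivative^[2] p).eval (z i)))
    (i j : Fin n) (hij : i ≠ j) :
    ∑ k ∈ univ.filter (fun k => k ≠ i ∧ k ≠ j),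
        1 / ((z i - z k) * (z j - z k) ^ 2)
      = -3 / (z i - z j) ^ 3 + (C i 3 - C j 3) / (2 * (z i - z j) ^ 2)
        + (1 / (z i - z j)) * ((C j 3) ^ 2 / 4 - C j 4 / 3) := by
  have hfac : derivative p
      = Polynomial.C (derivative p).leadingCoeff * ∏ k, (X - Polynomial.C (z k)) :=
    eq_C_leadingCoeff_mul_prod_X_sub_C ((natDegree_derivative_le p).trans (by simp [hdeg])) hz hcrit
  have hC' : ∀ i k, C i (k + 1) = (derivative^[k] (derivative p)).eval (z i)
      / (derivative (derivative p)).eval (z i) := fun i k => hC i (k + 1)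
  have hnd' : ∀ i, (derivative (derivative p)).eval (z i) ≠ 0 := hnd
  rw [hfac] at hC' hnd'
  have hC3 : ∀ i, C i 3 = 2 * ∑ m ∈ univ.erase i, (z i - z m)⁻¹ := fun i => by
    rw [hC' i 2, eval_iterate_derivative_two_div_eval_derivative i hz (hnd' i)]
  have hC4 : ∀ i, C i 4 = 3 * ((∑ m ∈ univ.erase i, (z i - z m)⁻¹) ^ 2
      - ∑ m ∈ univ.erase i, ((z i - z m) ^ 2)⁻¹) := fun i => by
    rw [hC' i 3, eval_iterate_derivative_three_div_eval_derivative i hz (hnd' i)]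
  rw [sum_one_div_mul_sq_sub_eq hz hij, hC3 i, hC3 j, hC4 j]
  generalize z i - z j = d
  ring

/-- For distinct indices `i ≠ j`,
`∑_{{k≠i,j}} 1/(z_ik·z_jk²) = −3/z_ij³ + (C_i3 − C_j3)/(2z_ij²)
  + (1/z_ij)·(C_j3²/4 − C_j4/3)`. -/
theorem stmt_12 (n : ℕ) (hn : 1 ≤ n) (p : Polynomial ℂ)
    (hp : p.Monic) (hdeg : p.natDegree = n + 1)
    (z : Fin n → ℂ) (hz : Function.Injective z)
    (hcrit : ∀ i, (derivative p).eval (z i) = 0)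
    (hnd : ∀ i, (derivative^[2] p).eval (z i) ≠ 0)
    (C : Fin n → ℕ → ℂ)
    (hC : ∀ i k, C i k = ((derivative^[k] p).eval (z i)) / ((derivative^[2] p).eval (z i)))
    (i j : Fin n) (hij : i ≠ j) :
    ∑ k ∈ univ.filter (fun k => k ≠ i ∧ k ≠ j),
        1 / ((z i - z k) * (z j - z k) ^ 2)
      = -3 / (z i - z j) ^ 3 + (C i 3 - C j 3) / (2 * (z i - z j) ^ 2)
        + (1 / (z i - z j)) * ((C j 3) ^ 2 / 4 - C j 4 / 3) :=
  stmt_12_general n p hdeg z hz hcrit hnd C hC i j hij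
end
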